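/- arXiv:1709.09256 — 2 statements merged into one kernel-verified Lean document; each statement's English description precedes it below -/
import Mathlib

section
/- The intersection graph of the 10 lines on a quintic del Pezzo surface is isomorphic to the Petersen graph: if lines are labeled by 2-element subsets of {1,...,5}, two lines intersect if and only if their labels are disjoint. -/
set_option maxHeartbeats 2000000

/-- The intersection form on `H²(S;ℤ) ≅ ℤ^5` for the quintic del Pezzo surface `S`. -/
def dP5Form (v w : Fin 5 → ℤ) : ℤ :=
  v 0 * w 0 - ∑ i : Fin 4, v i.succ * w i.succ

/-- The canonical class `K_S = −3e₀ + e₁ + e₂ + e₃ + e₄`. -/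
def dP5K : Fin 5 → ℤ := ![-3, 1, 1, 1, 1]

/-- A line class: `v·v = −1` and `v·K_S = −1`. -/
def IsLineClass (v : Fin 5 → ℤ) : Prop := dP5Form v v = -1 ∧ dP5Form v dP5K = -1

instance : DecidablePred IsLineClass :=
  fun v => decidable_of_iff (dP5Form v v = -1 ∧ dP5Form v dP5K = -1) Iff.rfl

/-- The explicit labeling of the ten line classes by 2-element subsets of `Fin 5`:
a subset containing `4` corresponds to an exceptional class `eᵢ`, and a subset
contained in `{0,1,2,3}` corresponds to `e₀ - eⱼ - eₖ` where `{j,k}` is the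
complement of the subset inside `{0,1,2,3}`. -/
def petg (s : {s : Finset (Fin 5) // s.card = 2}) : Fin 5 → ℤ := fun i =>
  if i = 0 then (if (4:Fin 5) ∈ s.1 then 0 else 1)
  else if (4:Fin 5) ∈ s.1 then (if (i - 1 : Fin 5) ∈ s.1 then 1 else 0)
  else (if (i - 1 : Fin 5) ∈ s.1 then 0 else -1)

lemma petg_line : ∀ s, IsLineClass (petg s) := by decide

lemma petg_inj : ∀ s t, (∀ i, petg s i = petg t i) → s = t := by decide

lemma petg_petersen : ∀ s t : {s : Finset (Fin 5) // s.card = 2}, s ≠ t →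
    (dP5Form (petg s) (petg t) = 1 ↔ Disjoint s.1 t.1) := by decide

lemma petg_surj (v : Fin 5 → ℤ) (h : IsLineClass v) : ∃ s, petg s = v := by
  obtain ⟨h1, h2⟩ := h
  obtain ⟨a, b, c, d, e, rfl⟩ : ∃ a b c d e, v = ![a,b,c,d,e] :=
    ⟨v 0, v 1, v 2, v 3, v 4, by funext i; fin_cases i <;> rfl⟩
  simp [dP5Form, dP5K, Fin.sum_univ_four] at h1 h2
  have ha0 : 0 ≤ a := by nlinarith [sq_nonneg (b-c), sq_nonneg (b-d), sq_nonneg (b-e), sq_nonneg (c-d), sq_nonneg (c-e), sq_nonneg (d-e)]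
  have ha1 : a ≤ 1 := by nlinarith [sq_nonneg (b-c), sq_nonneg (b-d), sq_nonneg (b-e), sq_nonneg (c-d), sq_nonneg (c-e), sq_nonneg (d-e)]
  have hb : -1 ≤ b ∧ b ≤ 1 := by constructor <;> nlinarith [sq_nonneg c, sq_nonneg d, sq_nonneg e]
  have hc : -1 ≤ c ∧ c ≤ 1 := by constructor <;> nlinarith [sq_nonneg b, sq_nonneg d, sq_nonneg e]
  have hd : -1 ≤ d ∧ d ≤ 1 := by constructor <;> nlinarith [sq_nonneg b, sq_nonneg c, sq_nonneg e]
  have he : -1 ≤ e ∧ e ≤ 1 := by constructor <;> nlinarith [sq_nonneg b, sq_nonneg c, sq_nonneg d]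
  obtain ⟨hb1, hb2⟩ := hb; obtain ⟨hc1, hc2⟩ := hc
  obtain ⟨hd1, hd2⟩ := hd; obtain ⟨he1, he2⟩ := he
  interval_cases a <;> interval_cases b <;> interval_cases c <;>
    interval_cases d <;> interval_cases e <;> first | omega | decide

/-- the intersection graph of the 10 lines on a quintic del Pezzo surface is
the Petersen graph: the lines can be labeled bijectively by the 2-element subsets of
`{1,…,5}` in such a way that two distinct lines meet (intersection number 1) if and only if
their labels are disjoint. -/
theorem line_intersection_graph_is_petersen :
    ∃ f : {s : Finset (Fin 5) // s.card = 2} → {v : Fin 5 → ℤ // IsLineClass v},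
      Function.Bijective f ∧
      ∀ s t : {s : Finset (Fin 5) // s.card = 2}, s ≠ t →
        (dP5Form (f s).1 (f t).1 = 1 ↔ Disjoint s.1 t.1) := by
  refine ⟨fun s => ⟨petg s, petg_line s⟩, ⟨?_, ?_⟩, ?_⟩
  · intro s t h
    exact petg_inj s t (fun i => congrFun (congrArg Subtype.val h) i)
  · rintro ⟨v, hv⟩
    obtain ⟨s, hs⟩ := petg_surj v hv
    exact ⟨s, Subtype.ext hs⟩
  · exact petg_petersen
end

section
/- The automorphism group of the Petersen graph is isomorphic to the symmetric group S_5. -/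
/-- Vertices of the Petersen graph: 2-element subsets of `{1,…,5}`. -/
abbrev PetersenV := {s : Finset (Fin 5) // s.card = 2}

/-- The Petersen graph: two 2-element subsets of `{1,…,5}` are adjacent exactly when they
are disjoint. -/
def Petersen : SimpleGraph PetersenV where
  Adj s t := Disjoint s.1 t.1
  symm := ⟨fun s t h => h.symm⟩
  loopless := by
    constructor
    intro s h
    have h0 : s.1 = ⊥ := disjoint_self.mp h
    have h2 := s.2
    rw [h0] at h2
    simp at h2

/-!
The independent sets of size four of the Petersen graph are exactly the five stars
`{s | i ∈ s}`: a pairwise intersecting family of 2-sets is either a star or lies inside a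
triangle `{xy, yu, xu}`, which has only three members. Hence every automorphism permutes the
stars, say `star i ↦ star (σ i)`, and then it maps each vertex `s` onto `σ '' s`, since `s` lies
in the stars of its two points. So the natural map `S₅ → Aut(Petersen)` is onto, and it is
one-to-one because `σ` can be read off from its action on the stars.
-/

open Finset

theorem Finset.eq_pair_of_card_eq_two {α : Type*} [DecidableEq α] {s : Finset α} {x y : α}
    (hs : #s = 2) (hxy : x ≠ y) (hx : x ∈ s) (hy : y ∈ s) : s = {x, y} :=
  (eq_of_subset_of_card_le (by simp [insert_subset_iff, hx, hy]) (by simp [hs, hxy])).symm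

theorem Finset.subset_of_not_disjoint_triangle {α : Type*} [DecidableEq α] {s : Finset α}
    {x y u : α} (hs : #s = 2) (hxy : x ≠ y) (hxu : x ≠ u) (hyu : y ≠ u)
    (hsxy : ¬Disjoint s {x, y}) (hsyu : ¬Disjoint s {y, u}) (hsxu : ¬Disjoint s {x, u}) :
    s ⊆ {x, y, u} := by
  intro z hz
  by_contra hzT
  have hrest : #(s.erase z) ≤ 1 := by rw [card_erase_of_mem hz, hs]
  -- all three sides would have to pass through the one point of `s` other than `z`
  have meet : ∀ p q, ¬Disjoint s {p, q} → p ≠ z → q ≠ z →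
      ∃ v ∈ s.erase z, v = p ∨ v = q := fun p q h hp hq => by
      obtain ⟨v, hvs, hv⟩ := not_disjoint_iff.1 h
      refine ⟨v, mem_erase.2 ⟨?_, hvs⟩, by simpa using hv⟩
      grind
  obtain ⟨v₁, hv₁, h₁⟩ := meet x y hsxy (by grind) (by grind)
  obtain ⟨v₂, hv₂, h₂⟩ := meet y u hsyu (by grind) (by grind)
  obtain ⟨v₃, hv₃, h₃⟩ := meet x u hsxu (by grind) (by grind)
  have := card_le_one.1 hrest
  grind

theorem Finset.exists_common_mem_of_pairwise_not_disjoint_pairs {α : Type*} [DecidableEq α]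
    {𝒜 : Finset {s : Finset α // #s = 2}}
    (h𝒜 : (𝒜 : Set {s : Finset α // #s = 2}).Pairwise (fun s t => ¬Disjoint s.1 t.1))
    (hcard : 3 < #𝒜) : ∃ p, ∀ s ∈ 𝒜, p ∈ s.1 := by
  by_contra! hstar
  have hmeet : ∀ s ∈ 𝒜, ∀ t ∈ 𝒜, ¬Disjoint s.1 t.1 := by
    intro s hs t ht
    rcases eq_or_ne s t with rfl | hst
    · rw [disjoint_self, bot_eq_empty, ← card_eq_zero, s.2]
      omega
    · exact h𝒜 hs ht hst
  obtain ⟨a, ha⟩ : 𝒜.Nonempty := card_pos.1 (by omega)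
  obtain ⟨x, y, hxy, hax⟩ := card_eq_two.1 a.2
  obtain ⟨b, hb, hxb⟩ := hstar x
  obtain ⟨c, hc, hyc⟩ := hstar y
  have hyb : y ∈ b.1 := by
    obtain ⟨v, hva, hvb⟩ := not_disjoint_iff.1 (hmeet a ha b hb)
    grind
  have hxc : x ∈ c.1 := by
    obtain ⟨v, hva, hvc⟩ := not_disjoint_iff.1 (hmeet a ha c hc)
    grind
  obtain ⟨u, hub, huc⟩ := not_disjoint_iff.1 (hmeet b hb c hc)
  have hyu : y ≠ u := by rintro rfl; exact hyc huc
  have hxu : x ≠ u := by rintro rfl; exact hxb hub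
  have hbu : b.1 = {y, u} := eq_pair_of_card_eq_two b.2 hyu hyb hub
  have hcu : c.1 = {x, u} := eq_pair_of_card_eq_two c.2 hxu hxc huc
  have hsub : Set.MapsTo Subtype.val 𝒜 (({x, y, u} : Finset α).powersetCard 2) :=
    fun s hs => mem_powersetCard.2 ⟨subset_of_not_disjoint_triangle s.2 hxy hxu hyu
      (hax ▸ hmeet s hs a ha) (hbu ▸ hmeet s hs b hb) (hcu ▸ hmeet s hs c hc), s.2⟩
  have : #𝒜 ≤ 3 := calc
    #𝒜 ≤ #(({x, y, u} : Finset α).powersetCard 2) :=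
      card_le_card_of_injOn Subtype.val hsub Subtype.val_injective.injOn
    _ = (#({x, y, u} : Finset α)).choose 2 := card_powersetCard _ _
    _ ≤ Nat.choose 3 2 := Nat.choose_le_choose 2 card_le_three
    _ = 3 := rfl
  omega

theorem SimpleGraph.IsNIndepSet.image_iso {α β : Type*} [DecidableEq β] {G : SimpleGraph α}
    {H : SimpleGraph β} {n : ℕ} {s : Finset α} (h : G.IsNIndepSet n s) (f : G ≃g H) :
    H.IsNIndepSet n (s.image f) := by
  refine ⟨?_, by rw [card_image_of_injective _ f.injective, h.card_eq]⟩
  rintro _ hfv _ hfw hne hadj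
  obtain ⟨v, hv, rfl⟩ := mem_image.1 hfv
  obtain ⟨w, hw, rfl⟩ := mem_image.1 hfw
  exact h.isIndepSet hv hw (ne_of_apply_ne f hne) (f.map_adj_iff.1 hadj)

namespace Petersen

def permIso (σ : Equiv.Perm (Fin 5)) : Petersen ≃g Petersen where
  toEquiv := σ.finsetCongr.subtypeEquiv (by simp)
  map_rel_iff' := disjoint_map _

@[simp] lemma coe_permIso_apply (σ : Equiv.Perm (Fin 5)) (s : PetersenV) :
    (permIso σ s).1 = s.1.map σ.toEmbedding := rfl

def permAction : Equiv.Perm (Fin 5) →* (Petersen ≃g Petersen) where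
  toFun := permIso
  map_one' := by
    ext s : 2
    exact map_refl
  map_mul' σ τ := by
    ext s : 2
    exact (map_map τ.toEmbedding σ.toEmbedding s.1).symm

@[simp] lemma permAction_apply (σ : Equiv.Perm (Fin 5)) : permAction σ = permIso σ := rfl

def star (i : Fin 5) : Finset PetersenV := {s | i ∈ s.1}

@[simp] lemma mem_star {i : Fin 5} {s : PetersenV} : s ∈ star i ↔ i ∈ s.1 := by
  simp [star]

lemma card_star (i : Fin 5) : #(star i) = 4 := by
  revert i; decide

lemma star_injective : Function.Injective star := by
  decide

lemma isNIndepSet_star (i : Fin 5) : Petersen.IsNIndepSet 4 (star i) :=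
  ⟨fun _ hs _ ht _ => not_disjoint_iff.2 ⟨i, mem_star.1 hs, mem_star.1 ht⟩, card_star i⟩

lemma eq_star_of_isNIndepSet {t : Finset PetersenV} (ht : Petersen.IsNIndepSet 4 t) :
    ∃ i, t = star i := by
  obtain ⟨i, hi⟩ :=
    exists_common_mem_of_pairwise_not_disjoint_pairs ht.isIndepSet (by rw [ht.card_eq]; norm_num)
  refine ⟨i, eq_of_subset_of_card_le (fun s hs => mem_star.2 (hi s hs)) ?_⟩
  rw [card_star, ht.card_eq]

lemma exists_image_star_eq (f : Petersen ≃g Petersen) (i : Fin 5) :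
    ∃ j, (star i).image f = star j :=
  eq_star_of_isNIndepSet ((isNIndepSet_star i).image_iso f)

lemma image_star_permAction (σ : Equiv.Perm (Fin 5)) (i : Fin 5) :
    (star i).image (permAction σ) = star (σ i) := by
  refine eq_of_subset_of_card_le ?_ ?_
  · intro s hs
    obtain ⟨t, ht, rfl⟩ := mem_image.1 hs
    simpa using ht
  · rw [card_image_of_injective _ (permAction σ).injective, card_star, card_star]

lemma permAction_injective : Function.Injective permAction := by
  intro σ τ h
  ext i : 1
  apply star_injective
  rw [← image_star_permAction, ← image_star_permAction, h]

lemma permAction_surjective : Function.Surjective permAction := by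
  intro f
  choose g hg using exists_image_star_eq f
  have hg_inj : Function.Injective g := fun i j hij =>
    star_injective (image_injective f.injective (by rw [hg, hg, hij]))
  refine ⟨Equiv.ofBijective g (Finite.injective_iff_bijective.1 hg_inj), ?_⟩
  ext s : 2
  refine eq_of_subset_of_card_le ?_ ?_
  · intro j hj
    obtain ⟨i, hi, rfl⟩ := mem_map.1 hj
    exact mem_star.1 (hg i ▸ mem_image_of_mem f (mem_star.2 hi))
  · rw [(f s).2, permAction_apply, coe_permIso_apply, card_map, s.2]

end Petersen

/-- the automorphism group of the Petersen graph is isomorphic to the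
symmetric group `S₅`. -/
theorem petersen_automorphism_group :
    Nonempty ((Petersen ≃g Petersen) ≃* Equiv.Perm (Fin 5)) :=
  ⟨(MulEquiv.ofBijective Petersen.permAction
    ⟨Petersen.permAction_injective, Petersen.permAction_surjective⟩).symm⟩
end
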